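/- Stroock's formula in dimension one: for a polynomial φ and standard Gaussian measure γ, φ admits the Hermite (chaos) expansion φ(x) = ∑_{n=0}^{deg φ} (c_n/n!) H_n(x), where c_n = ∫ φ^{(n)} dγ, i.e. the n-th chaos coefficient is the Gaussian expectation of the n-th derivative. -/

import Mathlib

/-!
Both sides are linear in `φ`: the coefficient `cₙ(φ) = ∫ φ⁽ⁿ⁾ dγ` is a linear functional. Since
`H₀, …, H_d` span the polynomials of degree `≤ d`, it suffices to take `φ = Hₘ`. Then
`Hₘ⁽ⁿ⁾ = m!/(m-n)! · H_{m-n}` for `n ≤ m` (and `0` for `n > m`), while `∫ Hₖ dγ = δₖ₀` because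
`H_{k+1} = X Hₖ - Hₖ'` and Stein's identity `∫ x p(x) dγ = ∫ p' dγ`. Hence `cₙ(Hₘ) = m! δₙₘ`.
-/

open Polynomial MeasureTheory ProbabilityTheory
open scoped NNReal

section Gaussian

variable {μ : ℝ} {v : ℝ≥0}

lemma integrable_eval_gaussianReal (p : ℝ[X]) :
    Integrable (fun x ↦ p.eval x) (gaussianReal μ v) := by
  induction p using Polynomial.induction_on' with
  | add p q hp hq => simpa only [eval_add] using hp.fun_add hq
  | monomial n a =>
    simp only [eval_monomial]
    refine Integrable.const_mul ?_ a
    refine ((memLp_id_gaussianReal n).integrable_norm_pow').mono' (by fun_prop) ?_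
    exact ae_of_all _ fun x ↦ by simp

lemma integrable_gaussianPDFReal_mul_eval (hv : v ≠ 0) (p : ℝ[X]) :
    Integrable (fun x ↦ gaussianPDFReal μ v x * p.eval x) := by
  have h := integrable_eval_gaussianReal (μ := μ) (v := v) p
  rw [gaussianReal_of_var_ne_zero _ hv, integrable_withDensity_iff_integrable_smul'
    (measurable_gaussianPDF _ _) (ae_of_all _ fun _ ↦ gaussianPDF_lt_top)] at h
  simpa only [toReal_gaussianPDF, smul_eq_mul] using h

lemma hasDerivAt_gaussianPDFReal (x : ℝ) :
    HasDerivAt (gaussianPDFReal μ v) (-((x - μ) / v) * gaussianPDFReal μ v x) x := by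
  have hexp : HasDerivAt (fun y ↦ -(y - μ) ^ 2 / (2 * v)) (-((x - μ) / v)) x := by
    refine ((((hasDerivAt_id x).sub_const μ).fun_pow 2).fun_neg.div_const
      (2 * (v : ℝ))).congr_deriv ?_
    simp only [id, Nat.add_one_sub_one, pow_one, Nat.cast_ofNat]
    ring
  simp only [gaussianPDFReal_def]
  exact (hexp.exp.const_mul (√(2 * Real.pi * v))⁻¹).congr_deriv (by ring)

/-- Stein's identity, from integrating `(p · gaussianPDFReal)' = 0` over `ℝ`. -/
lemma integral_sub_mul_eval_gaussianReal (hv : v ≠ 0) (p : ℝ[X]) :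
    ∫ x, (x - μ) * p.eval x ∂gaussianReal μ v
      = v * ∫ x, (derivative p).eval x ∂gaussianReal μ v := by
  have hderiv (x : ℝ) : HasDerivAt (fun y ↦ gaussianPDFReal μ v y * p.eval y)
      (gaussianPDFReal μ v x * (derivative p).eval x
        - (v : ℝ)⁻¹ * (gaussianPDFReal μ v x * ((X - C μ) * p).eval x)) x :=
    ((hasDerivAt_gaussianPDFReal x).mul (p.hasDerivAt x)).congr_deriv (by
      simp only [eval_mul, eval_sub, eval_X, eval_C]; ring)
  have hzero := integral_eq_zero_of_hasDerivAt_of_integrable hderiv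
    ((integrable_gaussianPDFReal_mul_eval hv _).sub
      ((integrable_gaussianPDFReal_mul_eval hv _).const_mul _))
    (integrable_gaussianPDFReal_mul_eval hv p)
  rw [integral_sub (integrable_gaussianPDFReal_mul_eval hv _)
      ((integrable_gaussianPDFReal_mul_eval hv _).const_mul _), integral_const_mul,
    sub_eq_zero] at hzero
  simp only [integral_gaussianReal_eq_integral_smul hv, smul_eq_mul, hzero]
  have hv' : (v : ℝ) ≠ 0 := by exact_mod_cast hv
  simp [hv']

end Gaussian

lemma derivative_hermite_succ (n : ℕ) : derivative (hermite (n + 1)) = (n + 1) • hermite n := by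
  induction n with
  | zero => simp
  | succ n ih =>
    rw [hermite_succ (n + 1), derivative_sub, derivative_mul, derivative_X, one_mul, ih,
      derivative_smul, hermite_succ n]
    simp only [nsmul_eq_mul]
    push_cast
    ring

lemma iterate_derivative_hermite_add (m k : ℕ) :
    derivative^[k] (hermite (m + k)) = (m + k).descFactorial k • hermite m := by
  induction k with
  | zero => simp
  | succ k ih =>
    rw [Function.iterate_succ_apply, ← add_assoc, derivative_hermite_succ,
      iterate_derivative_smul, ih, smul_smul, Nat.succ_descFactorial_succ]

noncomputable def realHermite (n : ℕ) : ℝ[X] := (hermite n).map (Int.castRingHom ℝ)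

lemma aeval_hermite (n : ℕ) (x : ℝ) : aeval x (hermite n) = (realHermite n).eval x := by
  rw [realHermite, eval_map, aeval_def, algebraMap_int_eq]

lemma realHermite_zero : realHermite 0 = 1 := by simp [realHermite]

lemma realHermite_succ (n : ℕ) :
    realHermite (n + 1) = X * realHermite n - derivative (realHermite n) := by
  simp [realHermite, hermite_succ, derivative_map]

lemma degree_realHermite (n : ℕ) : (realHermite n).degree = n := by
  rw [realHermite, degree_map_eq_of_leadingCoeff_ne_zero _ (by simp), degree_hermite]

lemma leadingCoeff_realHermite (n : ℕ) : (realHermite n).leadingCoeff = 1 :=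
  ((hermite_monic n).map _).leadingCoeff

lemma iterate_derivative_realHermite_add (m k : ℕ) :
    derivative^[k] (realHermite (m + k)) = (m + k).descFactorial k • realHermite m := by
  rw [realHermite, iterate_derivative_map, iterate_derivative_hermite_add, ← coe_mapRingHom,
    map_nsmul, coe_mapRingHom, realHermite]

lemma integral_eval_realHermite (n : ℕ) :
    ∫ x, (realHermite n).eval x ∂gaussianReal 0 1 = if n = 0 then 1 else 0 := by
  cases n with
  | zero => simp [realHermite_zero]
  | succ n =>
    have hstein := integral_sub_mul_eval_gaussianReal (μ := 0) one_ne_zero (realHermite n)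
    simp only [sub_zero, NNReal.coe_one, one_mul] at hstein
    simp only [realHermite_succ, eval_sub, eval_mul, eval_X, Nat.add_one_ne_zero, if_false]
    have hint : Integrable (fun x ↦ x * (realHermite n).eval x) (gaussianReal 0 1) := by
      have h := integrable_eval_gaussianReal (μ := 0) (v := 1) (X * realHermite n)
      simp only [eval_mul, eval_X] at h
      exact h
    rw [integral_sub hint (integrable_eval_gaussianReal _), hstein, sub_self]

lemma integral_eval_iterate_derivative_realHermite (n m : ℕ) :
    ∫ x, (derivative^[n] (realHermite m)).eval x ∂gaussianReal 0 1
      = if n = m then (m.factorial : ℝ) else 0 := by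
  rcases le_or_gt n m with h | h
  · obtain ⟨j, rfl⟩ := Nat.exists_eq_add_of_le' h
    simp only [iterate_derivative_realHermite_add, nsmul_eq_mul, eval_mul, eval_natCast,
      integral_const_mul, integral_eval_realHermite]
    rcases j with _ | j
    · simp [Nat.descFactorial_self]
    · simp
  · rw [iterate_derivative_eq_zero
      (by rwa [natDegree_eq_of_degree_eq_some (degree_realHermite m)])]
    simp [h.ne']

noncomputable def chaosCoeff (n : ℕ) : ℝ[X] →ₗ[ℝ] ℝ where
  toFun φ := ∫ x, (derivative^[n] φ).eval x ∂gaussianReal 0 1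
  map_add' φ ψ := by
    simp only [iterate_map_add, eval_add]
    exact integral_add (integrable_eval_gaussianReal _) (integrable_eval_gaussianReal _)
  map_smul' c φ := by
    simp only [iterate_derivative_smul, eval_smul, smul_eq_mul, RingHom.id_apply]
    exact integral_const_mul c _

noncomputable def chaosExpansion (N : ℕ) : ℝ[X] →ₗ[ℝ] ℝ[X] where
  toFun φ := ∑ n ∈ Finset.range N, (chaosCoeff n φ / n.factorial) • realHermite n
  map_add' φ ψ := by simp only [map_add, add_div, add_smul, Finset.sum_add_distrib]
  map_smul' c φ := by
    simp only [map_smul, smul_eq_mul, mul_div_assoc, mul_smul, ← Finset.smul_sum,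
      RingHom.id_apply]

lemma chaosExpansion_realHermite {m N : ℕ} (hm : m < N) :
    chaosExpansion N (realHermite m) = realHermite m := by
  simp only [chaosExpansion, LinearMap.coe_mk, AddHom.coe_mk, chaosCoeff,
    integral_eval_iterate_derivative_realHermite]
  rw [Finset.sum_eq_single_of_mem m (Finset.mem_range.mpr hm) fun n _ hn ↦ by simp [hn]]
  simp [Nat.factorial_ne_zero]

lemma chaosExpansion_eq_self {N : ℕ} {φ : ℝ[X]} (hφ : φ.degree < N) :
    chaosExpansion N φ = φ := by
  let H : Sequence ℝ := ⟨realHermite, degree_realHermite⟩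
  have hspan : φ ∈ Submodule.span ℝ (H '' Set.Iio N) := by
    rw [H.span_degreeLT fun i _ ↦ by simp [H, leadingCoeff_realHermite]]
    exact mem_degreeLT.mpr hφ
  refine LinearMap.eqOn_span' (f := chaosExpansion N) (g := LinearMap.id) ?_ hspan
  rintro _ ⟨m, hm, rfl⟩
  exact chaosExpansion_realHermite hm

/-- Stroock's formula in dimension one: a polynomial `φ` has the Hermite expansion
`φ(x) = ∑ₙ (cₙ/n!) Hₙ(x)` with `cₙ = ∫ φ⁽ⁿ⁾ dγ`. -/
theorem stroock_hermite_expansion (φ : Polynomial ℝ) (x : ℝ) :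
    φ.eval x
      = ∑ n ∈ Finset.range (φ.natDegree + 1),
          (∫ y : ℝ, (derivative^[n] φ).eval y ∂(gaussianReal 0 1)) / n.factorial *
            (aeval x (hermite n) : ℝ) := by
  have hφ : φ.degree < ↑(φ.natDegree + 1) :=
    degree_le_natDegree.trans_lt (by exact_mod_cast φ.natDegree.lt_succ_self)
  conv_lhs => rw [← chaosExpansion_eq_self hφ]
  simp [chaosExpansion, chaosCoeff, eval_finsetSum, aeval_hermite]
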